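/- arXiv:1703.03235 — 3 statements merged into one kernel-verified Lean document; each statement's English description precedes it below -/
import Mathlib

section
/- A generalized Gabidulin code of length n and dimension k (k ≤ n ≤ m) over F_{q^m} has minimum rank distance n - k + 1, i.e., it is an MRD code. -/
/-!
Write `σ` for the `F_q`-automorphism `x ↦ x ^ q ^ s` of `K`. The codeword of `f` is
`(L g_1, …, L g_n)` for the `F_q`-linear map `L = ∑_{i<k} f_i σ^i`, so its rank is
`dim L(W) = n - dim (W ∩ ker L)` with `W = span (g_j)`. Since `gcd(s, m) = 1`, the powers of `σ`
exhaust `Gal(K/F_q)`, so the fixed field of `σ` is `F_q`. Then `L = ∑_{i≤d} a_i σ^i` with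
`a_d ≠ 0` has `dim ker L ≤ d`: for a nonzero root `v` of `L`, Abel summation with
`∑ a_i σ^i(v) = 0` factors `x ↦ L(v x)` as `L' ∘ (σ - 1)` with `L'` of `σ`-degree `d - 1`,
and `ker (σ - 1) = F_q`. This gives rank `≥ n - k + 1` for every nonzero codeword; equality holds
for a nonzero `L` vanishing on `g_1, …, g_{k-1}`, which exists because these are `k - 1` linear
conditions on `k` coefficients.
-/

open Finset Module LinearMap
open scoped Matrix

section RankNullity

variable {F V V₂ V₃ : Type*} [Field F] [AddCommGroup V] [Module F V] [AddCommGroup V₂]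
  [Module F V₂] [AddCommGroup V₃] [Module F V₃]

theorem Submodule.finrank_map_add_finrank_inf_ker [FiniteDimensional F V] (A : V →ₗ[F] V₂)
    (W : Submodule F V) : finrank F (W.map A) + finrank F ↥(W ⊓ ker A) = finrank F W := by
  rw [← range_domRestrict, ← Submodule.map_comap_subtype, Submodule.finrank_map_subtype_eq,
    ← ker_domRestrict]
  exact (A.domRestrict W).finrank_range_add_finrank_ker

theorem LinearMap.finrank_ker_comp_le [FiniteDimensional F V] [FiniteDimensional F V₂]
    (A : V₂ →ₗ[F] V₃) (B : V →ₗ[F] V₂) :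
    finrank F (ker (A ∘ₗ B)) ≤ finrank F (ker A) + finrank F (ker B) := by
  have hmap : (ker (A ∘ₗ B)).map B ≤ ker A := by rw [ker_comp]; exact Submodule.map_comap_le _ _
  have := Submodule.finrank_map_add_finrank_inf_ker B (ker (A ∘ₗ B))
  have := Submodule.finrank_mono hmap
  have := Submodule.finrank_mono (inf_le_right : ker (A ∘ₗ B) ⊓ ker B ≤ ker B)
  omega

theorem LinearMap.finrank_ker_le_finrank_ker_comp_of_surjective [FiniteDimensional F V]
    (A : V₂ →ₗ[F] V₃) {B : V →ₗ[F] V₂} (hB : Function.Surjective B) :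
    finrank F (ker A) ≤ finrank F (ker (A ∘ₗ B)) := by
  rw [ker_comp]
  calc finrank F (ker A) = finrank F ((ker A).comap B |>.map B) := by
        rw [Submodule.map_comap_eq_of_surjective hB]
    _ ≤ _ := Submodule.finrank_map_le _ _

theorem LinearIndependent.finrank_span_range_comp_add_finrank_inf_ker [FiniteDimensional F V]
    {ι : Type*} [Fintype ι] {g : ι → V} (hg : LinearIndependent F g) (A : V →ₗ[F] V₂) :
    finrank F (Submodule.span F (Set.range (A ∘ g))) +
      finrank F ↥(Submodule.span F (Set.range g) ⊓ ker A) = Fintype.card ι := by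
  rw [Set.range_comp, Submodule.span_image, Submodule.finrank_map_add_finrank_inf_ker,
    finrank_span_eq_card hg]

theorem Matrix.exists_ne_zero_mulVec_eq_zero_of_card_lt {m n : Type*} [Fintype m] [Fintype n]
    (h : Fintype.card m < Fintype.card n) (M : Matrix m n F) : ∃ v ≠ 0, M *ᵥ v = 0 := by
  have : ker M.mulVecLin ≠ ⊥ := ker_ne_bot_of_finrank_lt (by simpa using h)
  obtain ⟨v, hv, hv0⟩ := Submodule.exists_mem_ne_zero_of_ne_bot this
  exact ⟨v, hv0, hv⟩

end RankNullity

section Linearized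

variable {F K : Type*} [Field F] [Field K] [Algebra F K]

def linearizedMap (σ : K →ₐ[F] K) (a : ℕ → K) (d : ℕ) : Module.End F K :=
  ∑ i ∈ range d, a i • σ.toLinearMap ^ i

variable (σ : K →ₐ[F] K)

@[simp]
theorem linearizedMap_apply (a : ℕ → K) (d : ℕ) (x : K) :
    linearizedMap σ a d x = ∑ i ∈ range d, a i * (σ ^ i) x := by
  simp [linearizedMap, Module.End.pow_apply, AlgHom.coe_pow]

theorem linearizedMap_extend_apply {k : ℕ} (f : Fin k → K) (x : K) :
    linearizedMap σ (Function.extend Fin.val f 0) k x = ∑ i : Fin k, f i * (σ ^ (i : ℕ)) x := by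
  simp only [linearizedMap_apply, ← Fin.sum_univ_eq_sum_range, Fin.val_injective.extend_apply]

theorem linearizedMap_mul_mulLeft (a : ℕ → K) (d : ℕ) (v : K) :
    linearizedMap σ a d * mulLeft F v = linearizedMap σ (fun i => a i * (σ ^ i) v) d := by
  ext x
  simp [map_mul, mul_assoc]

theorem linearizedMap_succ_eq_mul {b : ℕ → K} {n : ℕ} (hb : ∑ i ∈ range (n + 1), b i = 0) :
    linearizedMap σ b (n + 1) =
      linearizedMap σ (fun j => ∑ i ∈ Ioc j n, b i) n * (σ.toLinearMap - 1) := by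
  calc linearizedMap σ b (n + 1)
      = ∑ i ∈ range (n + 1), b i • (σ.toLinearMap ^ i - 1) := by
        simp only [linearizedMap, smul_sub, sum_sub_distrib, ← sum_smul, hb, zero_smul, sub_zero]
    _ = ∑ i ∈ range (n + 1), ∑ j ∈ range i, b i • σ.toLinearMap ^ j * (σ.toLinearMap - 1) := by
        simp only [← geom_sum_mul, sum_mul, smul_sum, smul_mul_assoc]
    _ = ∑ j ∈ range n, ∑ i ∈ Ioc j n, b i • σ.toLinearMap ^ j * (σ.toLinearMap - 1) := by
        refine sum_comm' fun i j => ?_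
        simp only [Finset.mem_range, mem_Ioc]
        omega
    _ = _ := by simp only [linearizedMap, sum_mul, sum_smul]

theorem finrank_ker_toLinearMap_sub_one_le (hσ : ∀ x, σ x = x → x ∈ Set.range (algebraMap F K)) :
    finrank F (ker (σ.toLinearMap - 1)) ≤ 1 := by
  have : ker (σ.toLinearMap - 1) ≤ Submodule.span F {1} := fun x hx => by
    obtain ⟨c, rfl⟩ := hσ x (sub_eq_zero.mp hx)
    exact Submodule.mem_span_singleton.mpr ⟨c, (Algebra.algebraMap_eq_smul_one c).symm⟩
  exact (Submodule.finrank_mono this).trans (finrank_span_singleton one_ne_zero).le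

variable [FiniteDimensional F K] {σ}

theorem finrank_ker_linearizedMap_succ_le (hσ : ∀ x, σ x = x → x ∈ Set.range (algebraMap F K))
    {d : ℕ} {a : ℕ → K} (ha : a d ≠ 0) : finrank F (ker (linearizedMap σ a (d + 1))) ≤ d := by
  induction d generalizing a with
  | zero =>
    refine (Submodule.finrank_eq_zero.mpr <| (ker_eq_bot'.mpr fun x hx => ?_)).le
    simpa [ha] using hx
  | succ d ih =>
    obtain hker | hker := eq_or_ne (ker (linearizedMap σ a (d + 2))) ⊥
    · rw [hker, finrank_bot]
      omega
    obtain ⟨v, hv, hv0⟩ := (Submodule.ne_bot_iff _).mp hker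
    set b : ℕ → K := fun i => a i * (σ ^ i) v
    have hb : ∑ i ∈ range (d + 2), b i = 0 := by
      rwa [mem_ker, linearizedMap_apply] at hv
    have hlead : ∑ i ∈ Ioc d (d + 1), b i ≠ 0 := by
      rw [Nat.Ioc_succ_singleton, sum_singleton]
      exact mul_ne_zero ha ((map_ne_zero _).mpr hv0)
    have hfactor : linearizedMap σ a (d + 2) * mulLeft F v =
        linearizedMap σ (fun j => ∑ i ∈ Ioc j (d + 1), b i) (d + 1) * (σ.toLinearMap - 1) := by
      rw [linearizedMap_mul_mulLeft, linearizedMap_succ_eq_mul σ hb]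
    calc finrank F (ker (linearizedMap σ a (d + 2)))
        ≤ finrank F (ker (linearizedMap σ a (d + 2) * mulLeft F v)) :=
          finrank_ker_le_finrank_ker_comp_of_surjective _ fun y => ⟨v⁻¹ * y, by simp [hv0]⟩
      _ ≤ d + 1 := by
        rw [hfactor, Module.End.mul_eq_comp]
        have := finrank_ker_comp_le (linearizedMap σ (fun j => ∑ i ∈ Ioc j (d + 1), b i) (d + 1))
          (σ.toLinearMap - 1)
        have := ih (a := fun j => ∑ i ∈ Ioc j (d + 1), b i) hlead
        have := finrank_ker_toLinearMap_sub_one_le σ hσ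
        omega

theorem finrank_ker_linearizedMap_le (hσ : ∀ x, σ x = x → x ∈ Set.range (algebraMap F K))
    {d : ℕ} {a : ℕ → K} (ha : ∃ i < d, a i ≠ 0) :
    finrank F (ker (linearizedMap σ a d)) ≤ d - 1 := by
  classical
  obtain ⟨i, hid, hi⟩ := ha
  set e := Nat.findGreatest (fun j => a j ≠ 0) (d - 1)
  have he : a e ≠ 0 := Nat.findGreatest_spec (P := fun j => a j ≠ 0) (by omega) hi
  have hed : e ≤ d - 1 := Nat.findGreatest_le _
  have htrunc : linearizedMap σ a d = linearizedMap σ a (e + 1) := by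
    refine (sum_subset (range_subset_range.mpr (by omega)) fun j hj hje => ?_).symm
    have : a j = 0 := by
      by_contra h
      exact Nat.findGreatest_is_greatest (by simpa using hje) (by simp at hj; omega) h
    simp [this]
  rw [htrunc]
  exact (finrank_ker_linearizedMap_succ_le hσ he).trans hed

end Linearized

section GabidulinCode

variable {F K : Type*} [Field F] [Field K] [Algebra F K] [FiniteDimensional F K]
  {σ : K →ₐ[F] K} {n k : ℕ} {g : Fin n → K}

def gabidulinCode (σ : K →ₐ[F] K) (k : ℕ) (g : Fin n → K) : Set (Fin n → K) :=
  {x | ∃ f : Fin k → K, x = fun j => ∑ i : Fin k, f i * (σ ^ (i : ℕ)) (g j)}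

theorem LinearIndependent.le_finrank_span_range_linearizedMap_comp
    (hσ : ∀ x, σ x = x → x ∈ Set.range (algebraMap F K)) (hg : LinearIndependent F g)
    (hkn : k ≤ n) {a : ℕ → K} (ha : ∃ i < k, a i ≠ 0) :
    n - k + 1 ≤ finrank F (Submodule.span F (Set.range (linearizedMap σ a k ∘ g))) := by
  have hrank := hg.finrank_span_range_comp_add_finrank_inf_ker (linearizedMap σ a k)
  have hker := finrank_ker_linearizedMap_le hσ ha
  have := Submodule.finrank_mono
    (inf_le_right : Submodule.span F (Set.range g) ⊓ ker (linearizedMap σ a k) ≤ _)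
  obtain ⟨i, hi, -⟩ := ha
  rw [Fintype.card_fin] at hrank
  omega

theorem le_finrank_span_range_sub_of_mem_gabidulinCode
    (hσ : ∀ x, σ x = x → x ∈ Set.range (algebraMap F K)) (hg : LinearIndependent F g)
    (hkn : k ≤ n) {c c' : Fin n → K} (hc : c ∈ gabidulinCode σ k g)
    (hc' : c' ∈ gabidulinCode σ k g) (hne : c ≠ c') :
    n - k + 1 ≤ finrank F (Submodule.span F (Set.range (c - c'))) := by
  obtain ⟨f, rfl⟩ := hc
  obtain ⟨f', rfl⟩ := hc'
  obtain ⟨i, hi⟩ : ∃ i, f i ≠ f' i := Function.ne_iff.mp (by rintro rfl; exact hne rfl)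
  have hdiff : ((fun j => ∑ i : Fin k, f i * (σ ^ (i : ℕ)) (g j)) -
      fun j => ∑ i : Fin k, f' i * (σ ^ (i : ℕ)) (g j)) =
        linearizedMap σ (Function.extend Fin.val (f - f') 0) k ∘ g := by
    funext j
    simp only [Pi.sub_apply, Function.comp_apply, linearizedMap_extend_apply,
      sub_mul, sum_sub_distrib]
  rw [hdiff]
  refine hg.le_finrank_span_range_linearizedMap_comp hσ hkn ⟨i, i.2, ?_⟩
  simpa [Fin.val_injective.extend_apply, sub_eq_zero] using hi

theorem exists_mem_gabidulinCode_finrank_span_range_eq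
    (hσ : ∀ x, σ x = x → x ∈ Set.range (algebraMap F K)) (hg : LinearIndependent F g)
    (hk : 0 < k) (hkn : k ≤ n) : ∃ c ∈ gabidulinCode σ k g, c ≠ 0 ∧
      finrank F (Submodule.span F (Set.range c)) = n - k + 1 := by
  have hk' : k - 1 ≤ n := by omega
  obtain ⟨f, hf0, hfg⟩ := Matrix.exists_ne_zero_mulVec_eq_zero_of_card_lt
    (M := Matrix.of fun (j : Fin (k - 1)) (i : Fin k) => (σ ^ (i : ℕ)) (g (Fin.castLE hk' j)))
    (by simp only [Fintype.card_fin]; omega)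
  set L := linearizedMap σ (Function.extend Fin.val f 0) k
  have hvanish : Submodule.span F (Set.range (g ∘ Fin.castLE hk')) ≤
      Submodule.span F (Set.range g) ⊓ ker L := by
    refine le_inf (Submodule.span_mono (Set.range_comp_subset_range _ _))
      (Submodule.span_le.mpr ?_)
    rintro _ ⟨j, rfl⟩
    rw [Function.comp_apply, SetLike.mem_coe, mem_ker, linearizedMap_extend_apply]
    simpa [Matrix.mulVec, dotProduct, mul_comm] using congrFun hfg j
  have hup := Submodule.finrank_mono hvanish
  rw [finrank_span_eq_card (hg.comp _ (Fin.castLE_injective hk')), Fintype.card_fin] at hup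
  have hrank := hg.finrank_span_range_comp_add_finrank_inf_ker L
  obtain ⟨i, hi⟩ := Function.ne_iff.mp hf0
  have hlow : n - k + 1 ≤ finrank F (Submodule.span F (Set.range (L ∘ g))) :=
    hg.le_finrank_span_range_linearizedMap_comp hσ hkn ⟨i, i.2, by
      rwa [Fin.val_injective.extend_apply]⟩
  rw [Fintype.card_fin] at hrank
  have hrk : finrank F (Submodule.span F (Set.range (L ∘ g))) = n - k + 1 := by omega
  refine ⟨L ∘ g, ⟨f, funext fun j => linearizedMap_extend_apply σ f (g j)⟩,
    fun h => ?_, hrk⟩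
  rw [h, Submodule.span_eq_bot.mpr (by simp), finrank_bot] at hrk
  omega

end GabidulinCode

namespace FiniteField

variable {Fq K : Type*} [Field Fq] [Fintype Fq] [Field K] [Algebra Fq K]

theorem frobeniusAlgHom_pow_pow_apply (s i : ℕ) (x : K) :
    ((frobeniusAlgHom Fq K ^ s) ^ i) x = x ^ Fintype.card Fq ^ (s * i) := by
  rw [← pow_mul, AlgHom.coe_pow, coe_frobeniusAlgHom, pow_iterate]

variable [Finite K]

theorem mem_range_algebraMap_of_frobeniusAlgHom_apply_eq {x : K}
    (hx : frobeniusAlgHom Fq K x = x) : x ∈ Set.range (algebraMap Fq K) := by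
  refine (IsGalois.mem_range_algebraMap_iff_fixed x).mpr fun τ => ?_
  obtain ⟨n, rfl⟩ := (bijective_frobeniusAlgEquivOfAlgebraic_pow Fq K).2 τ
  rw [AlgEquiv.coe_pow]
  exact Function.iterate_fixed hx n

theorem mem_range_algebraMap_of_frobeniusAlgHom_pow_apply_eq {s : ℕ}
    (hs : s.Coprime (finrank Fq K)) {x : K} (hx : (frobeniusAlgHom Fq K ^ s) x = x) :
    x ∈ Set.range (algebraMap Fq K) := by
  rw [← orderOf_frobeniusAlgHom] at hs
  obtain ⟨a, ha⟩ := exists_pow_eq_self_of_coprime hs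
  refine mem_range_algebraMap_of_frobeniusAlgHom_apply_eq ?_
  rw [← ha, AlgHom.coe_pow]
  exact Function.iterate_fixed hx a

end FiniteField

theorem gabidulin_is_MRD_general (q m n k s : ℕ) (Fq K : Type*) [Field Fq] [Fintype Fq]
    [Field K] [Algebra Fq K] [FiniteDimensional Fq K]
    (hq : Fintype.card Fq = q) (hm : Module.finrank Fq K = m)
    (hk : 0 < k) (hkn : k ≤ n) (hs : Nat.Coprime s m)
    (g : Fin n → K) (hg : LinearIndependent Fq g)
    (C : Set (Fin n → K))
    (hC : C = {x | ∃ f : Fin k → K, x = fun j => ∑ i : Fin k, f i * g j ^ q ^ (s * (i : ℕ))}) :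
    (∀ c ∈ C, ∀ c' ∈ C, c ≠ c' →
      n - k + 1 ≤ Module.finrank Fq (Submodule.span Fq (Set.range (c - c')))) ∧
    (∃ c ∈ C, ∃ c' ∈ C, c ≠ c' ∧
      Module.finrank Fq (Submodule.span Fq (Set.range (c - c'))) = n - k + 1) := by
  subst hq hm
  have : Finite K := Module.finite_of_finite Fq
  have hσ (x : K) := FiniteField.mem_range_algebraMap_of_frobeniusAlgHom_pow_apply_eq hs (x := x)
  have hCσ : C = gabidulinCode (FiniteField.frobeniusAlgHom Fq K ^ s) k g := by
    simp only [hC, gabidulinCode, FiniteField.frobeniusAlgHom_pow_pow_apply]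
  subst hCσ
  obtain ⟨c, hc, hc0, hrk⟩ := exists_mem_gabidulinCode_finrank_span_range_eq hσ hg hk hkn
  refine ⟨fun c hc c' hc' => le_finrank_span_range_sub_of_mem_gabidulinCode hσ hg hkn hc hc',
    c, hc, 0, ⟨0, by ext; simp⟩, hc0, by rwa [sub_zero]⟩

/-- A generalized Gabidulin code of length n and dimension k has minimum rank distance
n - k + 1, i.e. it is MRD. The rank distance of vectors in `F_{q^m}^n` is the dimension of
the `F_q`-span of the coordinates of their difference (the rank of the matrix
representation over `F_q`). -/
theorem gabidulin_is_MRD (q m n k s : ℕ) (Fq K : Type*) [Field Fq] [Fintype Fq]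
    [Field K] [Algebra Fq K] [FiniteDimensional Fq K]
    (hq : Fintype.card Fq = q) (hm : Module.finrank Fq K = m)
    (hk : 0 < k) (hkn : k ≤ n) (hnm : n ≤ m) (hs : Nat.Coprime s m)
    (g : Fin n → K) (hg : LinearIndependent Fq g)
    (C : Set (Fin n → K))
    (hC : C = {x | ∃ f : Fin k → K, x = fun j => ∑ i : Fin k, f i * g j ^ q ^ (s * (i : ℕ))}) :
    (∀ c ∈ C, ∀ c' ∈ C, c ≠ c' →
      n - k + 1 ≤ Module.finrank Fq (Submodule.span Fq (Set.range (c - c')))) ∧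
    (∃ c ∈ C, ∃ c' ∈ C, c ≠ c' ∧
      Module.finrank Fq (Submodule.span Fq (Set.range (c - c'))) = n - k + 1) :=
  gabidulin_is_MRD_general q m n k s Fq K hq hm hk hkn hs g hg C hC
end

section
/- Let A, W be n-element F_q-linearly independent subsets of F_{q^m} (n ≤ m), spanning subspaces 𝒜 and 𝒲 respectively. Let κ, L be F_q-linear maps F_{q^m} → F_{q^m} such that L agrees with κ on A ∩ W and, on a set of basis vectors completing 𝒜 ∩ 𝒲 to 𝒜, the differences (L - κ) take values forming part of a normal basis (hence linearly independent). Then d_S(𝒜,𝒲) ≤ 2·rank((κ - L)|_𝒜) ≤ d_S(𝒜,𝒲) + 2·rank((κ-L)|_{𝒜∩𝒲}) ≤ d_Δ(A,W), where d_S(𝒜,𝒲) = dim 𝒜 + dim 𝒲 - 2 dim(𝒜 ∩ 𝒲) is the subspace distance. -/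
/-!
The map `g = L - κ` kills `span (A ∩ W)`, a subspace of `𝒜 ∩ 𝒲` of dimension `#(A ∩ W)`, so by
rank–nullity `rank g|_{𝒜∩𝒲} ≤ dim(𝒜 ∩ 𝒲) - #(A ∩ W)`. Writing `𝒜 = (𝒜 ∩ 𝒲) + span v` with
`n - dim(𝒜 ∩ 𝒲)` vectors `v i` whose images under `g` are independent, the image `g 𝒜` contains
those `n - dim(𝒜 ∩ 𝒲)` independent vectors and is spanned by them together with `g(𝒜 ∩ 𝒲)`.
These three estimates are the three inequalities once `d_S = 2n - 2 dim(𝒜 ∩ 𝒲)` and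
`d_Δ = 2n - 2 #(A ∩ W)` are substituted.
-/

open Module Submodule

section

variable {K V V' : Type*} [DivisionRing K] [AddCommGroup V] [Module K V]
  [AddCommGroup V'] [Module K V'] (f : V →ₗ[K] V')

theorem Submodule.finrank_map_add_finrank_le_of_le_ker {N S : Submodule K V}
    [FiniteDimensional K N] (hSN : S ≤ N) (hSf : S ≤ LinearMap.ker f) :
    finrank K (map f N) + finrank K S ≤ finrank K N := by
  have hS : finrank K S ≤ finrank K (LinearMap.ker (f.domRestrict N)) := by
    rw [LinearMap.ker_domRestrict, ← (comapSubtypeEquivOfLe hSN).finrank_eq]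
    exact finrank_mono (comap_mono hSf)
  have := (f.domRestrict N).finrank_range_add_finrank_ker
  rw [LinearMap.range_domRestrict] at this
  omega

theorem Submodule.card_le_finrank_map_of_linearIndependent {ι : Type*} [Fintype ι]
    {N : Submodule K V} [FiniteDimensional K N] {v : ι → V} (hvN : ∀ i, v i ∈ N)
    (hv : LinearIndependent K (f ∘ v)) :
    Fintype.card ι ≤ finrank K (map f N) := by
  rw [← finrank_span_eq_card hv]
  refine finrank_mono (span_le.2 ?_)
  rintro _ ⟨i, rfl⟩
  exact mem_map_of_mem (hvN i)

theorem Submodule.finrank_map_sup_span_range_le {ι : Type*} [Fintype ι]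
    (P : Submodule K V) [FiniteDimensional K P] (v : ι → V) :
    finrank K (map f (P ⊔ span K (Set.range v))) ≤ finrank K (map f P) + Fintype.card ι := by
  rw [map_sup, map_span, ← Set.range_comp]
  have := FiniteDimensional.span_of_finite K (Set.finite_range (f ∘ v))
  exact (finrank_add_le_finrank_add_finrank _ _).trans
    (Nat.add_le_add_left (finrank_range_le_card (f ∘ v)) _)

end

theorem generalized_lpfv_inequalities_general (n : ℕ) (Fq K : Type*) [Field Fq]
    [Field K] [Algebra Fq K] [DecidableEq K]
    (A W : Finset K) (hA : A.card = n) (hW : W.card = n)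
    (hAi : LinearIndependent Fq ((↑·) : ↥((A : Finset K) : Set K) → K))
    (hWi : LinearIndependent Fq ((↑·) : ↥((W : Finset K) : Set K) → K))
    (𝒜 𝒲 : Submodule Fq K)
    (h𝒜 : 𝒜 = Submodule.span Fq (A : Set K)) (h𝒲 : 𝒲 = Submodule.span Fq (W : Set K))
    (κ L : K →ₗ[Fq] K)
    (hagree : ∀ x ∈ A ∩ W, L x = κ x)
    (hcompl : ∃ v : Fin (n - Module.finrank Fq ↥(𝒜 ⊓ 𝒲)) → K,
      (∀ i, v i ∈ 𝒜) ∧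
      LinearIndependent Fq (fun i => L (v i) - κ (v i)) ∧
      (𝒜 ⊓ 𝒲) ⊔ Submodule.span Fq (Set.range v) = 𝒜) :
    Module.finrank Fq 𝒜 + Module.finrank Fq 𝒲 - 2 * Module.finrank Fq ↥(𝒜 ⊓ 𝒲) ≤
        2 * Module.finrank Fq (Submodule.map (κ - L) 𝒜) ∧
    2 * Module.finrank Fq (Submodule.map (κ - L) 𝒜) ≤
        (Module.finrank Fq 𝒜 + Module.finrank Fq 𝒲 - 2 * Module.finrank Fq ↥(𝒜 ⊓ 𝒲)) +
          2 * Module.finrank Fq (Submodule.map (κ - L) (𝒜 ⊓ 𝒲)) ∧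
    (Module.finrank Fq 𝒜 + Module.finrank Fq 𝒲 - 2 * Module.finrank Fq ↥(𝒜 ⊓ 𝒲)) +
          2 * Module.finrank Fq (Submodule.map (κ - L) (𝒜 ⊓ 𝒲)) ≤
        (A \ W).card + (W \ A).card := by
  obtain ⟨v, hv𝒜, hv, hsup⟩ := hcompl
  subst h𝒜 h𝒲
  rw [← neg_sub L κ, Submodule.map_neg, Submodule.map_neg]
  have hdimA := finrank_span_finset_eq_card hAi
  have hdimW := finrank_span_finset_eq_card hWi
  have hdimAW := finrank_span_finset_eq_card
    (LinearIndepOn.mono hAi (Finset.coe_subset.2 (Finset.inter_subset_left (s₂ := W))))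
  have hinf_le := finrank_mono (inf_le_left : span Fq (A : Set K) ⊓ span Fq W ≤ span Fq A)
  have hlow := card_le_finrank_map_of_linearIndependent (L - κ) (N := span Fq A) hv𝒜 hv
  have hup := finrank_map_sup_span_range_le (L - κ) (span Fq A ⊓ span Fq W) v
  have hker : span Fq ((A ∩ W : Finset K) : Set K) ≤ LinearMap.ker (L - κ) :=
    span_le.2 fun x hx => by simp [hagree x hx]
  have hspan_le : span Fq ((A ∩ W : Finset K) : Set K) ≤ span Fq A ⊓ span Fq W :=
    le_inf (span_mono (Finset.coe_subset.2 Finset.inter_subset_left))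
      (span_mono (Finset.coe_subset.2 Finset.inter_subset_right))
  have hinf := finrank_map_add_finrank_le_of_le_ker (L - κ) hspan_le hker
  rw [hsup] at hup
  rw [Fintype.card_fin] at hlow hup
  rw [Finset.card_sdiff, Finset.card_sdiff, Finset.inter_comm W A]
  omega

/-- Generalized LPFV inequalities: with L agreeing with κ on A ∩ W and the differences
L - κ taking linearly independent (normal-basis) values on a completion of 𝒜 ∩ 𝒲 to a
basis of 𝒜, one has
d_S(𝒜,𝒲) ≤ 2·rank((κ-L)|_𝒜) ≤ d_S(𝒜,𝒲) + 2·rank((κ-L)|_{𝒜∩𝒲}) ≤ d_Δ(A,W). -/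
theorem generalized_lpfv_inequalities (q m n : ℕ) (Fq K : Type*) [Field Fq] [Fintype Fq]
    [Field K] [Algebra Fq K] [FiniteDimensional Fq K] [DecidableEq K]
    (hq : Fintype.card Fq = q) (hm : Module.finrank Fq K = m) (hn : n ≤ m)
    (A W : Finset K) (hA : A.card = n) (hW : W.card = n)
    (hAi : LinearIndependent Fq ((↑·) : ↥((A : Finset K) : Set K) → K))
    (hWi : LinearIndependent Fq ((↑·) : ↥((W : Finset K) : Set K) → K))
    (𝒜 𝒲 : Submodule Fq K)
    (h𝒜 : 𝒜 = Submodule.span Fq (A : Set K)) (h𝒲 : 𝒲 = Submodule.span Fq (W : Set K))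
    (κ L : K →ₗ[Fq] K)
    (hagree : ∀ x ∈ A ∩ W, L x = κ x)
    (hcompl : ∃ v : Fin (n - Module.finrank Fq ↥(𝒜 ⊓ 𝒲)) → K,
      (∀ i, v i ∈ 𝒜) ∧
      LinearIndependent Fq (fun i => L (v i) - κ (v i)) ∧
      (𝒜 ⊓ 𝒲) ⊔ Submodule.span Fq (Set.range v) = 𝒜) :
    Module.finrank Fq 𝒜 + Module.finrank Fq 𝒲 - 2 * Module.finrank Fq ↥(𝒜 ⊓ 𝒲) ≤
        2 * Module.finrank Fq (Submodule.map (κ - L) 𝒜) ∧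
    2 * Module.finrank Fq (Submodule.map (κ - L) 𝒜) ≤
        (Module.finrank Fq 𝒜 + Module.finrank Fq 𝒲 - 2 * Module.finrank Fq ↥(𝒜 ⊓ 𝒲)) +
          2 * Module.finrank Fq (Submodule.map (κ - L) (𝒜 ⊓ 𝒲)) ∧
    (Module.finrank Fq 𝒜 + Module.finrank Fq 𝒲 - 2 * Module.finrank Fq ↥(𝒜 ⊓ 𝒲)) +
          2 * Module.finrank Fq (Submodule.map (κ - L) (𝒜 ⊓ 𝒲)) ≤
        (A \ W).card + (W \ A).card :=
  generalized_lpfv_inequalities_general n Fq K A W hA hW hAi hWi 𝒜 𝒲 h𝒜 h𝒲 κ L hagree hcompl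
end

section
/- For every prime power q and positive integer m, there exists α ∈ F_{q^m} such that {α, α^q, α^{q^2}, ..., α^{q^{m-1}}} is a basis of F_{q^m} over F_q (existence of a normal basis). -/
open Module FiniteField

/-- The Galois group is `{Frobⁱ | i < n}`, so this is the normal basis theorem
`exists_linearIndependent_algEquiv_apply` reindexed along the powers of the Frobenius. -/
theorem FiniteField.exists_linearIndependent_pow_card_pow (K L : Type*) [Field K] [Fintype K]
    [Field L] [Algebra K L] [Finite L] :
    ∃ x : L, LinearIndependent K fun i : Fin (finrank K L) ↦ x ^ Fintype.card K ^ (i : ℕ) := by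
  obtain ⟨x, hx⟩ := exists_linearIndependent_algEquiv_apply K L
  refine ⟨x, ?_⟩
  convert hx.comp _ (bijective_frobeniusAlgEquivOfAlgebraic_pow K L).injective with i
  simp [AlgEquiv.coe_pow, coe_frobeniusAlgEquivOfAlgebraic_iterate]

/-- Existence of a normal basis: there is α ∈ F_{q^m} such that
{α, α^q, …, α^{q^{m-1}}} is an F_q-basis of F_{q^m}. -/
theorem exists_normal_basis (q m : ℕ) (Fq K : Type*) [Field Fq] [Fintype Fq]
    [Field K] [Algebra Fq K] [FiniteDimensional Fq K]
    (hq : Fintype.card Fq = q) (hm : Module.finrank Fq K = m) :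
    ∃ α : K, LinearIndependent Fq (fun i : Fin m => α ^ q ^ (i : ℕ)) ∧
      Submodule.span Fq (Set.range fun i : Fin m => α ^ q ^ (i : ℕ)) = ⊤ := by
  subst hq hm
  have : Finite K := Module.finite_of_finite Fq
  obtain ⟨α, hα⟩ := exists_linearIndependent_pow_card_pow Fq K
  exact ⟨α, hα, hα.span_eq_top_of_card_eq_finrank' (Fintype.card_fin _)⟩
end
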